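/- Let p be a probability distribution on {0,1,2,3}^n and fix B ∈ {0,1,2,3}^n. If A is uniform on {1,2,3}^n and, independently, C ~ p, then E[(−1/2)^{|(A⋆B) +₂ (A⋆C)|}] = p(B); i.e., the random variable H = (−1/2)^{|(A⋆B) +₂ (A⋆C)|} is an unbiased estimator of p(B). -/

import Mathlib

open scoped BigOperators

noncomputable section

/-- Identify `a ∈ {0,1,2,3}` with its base-2 representation `(a₁, a₂) ∈ 𝔽₂²`. -/
def bits (a : Fin 4) : ZMod 2 × ZMod 2 :=
  (((a.val / 2 : ℕ) : ZMod 2), ((a.val % 2 : ℕ) : ZMod 2))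

/-- Symplectic product `a ⋆ b = a₁b₂ + a₂b₁ (mod 2)`. -/
def sstar (a b : Fin 4) : ZMod 2 :=
  (bits a).1 * (bits b).2 + (bits a).2 * (bits b).1

/-- Coordinatewise symplectic product `A ⋆ B ∈ {0,1}ⁿ`. -/
def starN {n : ℕ} (A B : Fin n → Fin 4) : Fin n → ZMod 2 :=
  fun j => sstar (A j) (B j)

/-- Hamming weight of `x ∈ {0,1}ⁿ`. -/
def wt {n : ℕ} (x : Fin n → ZMod 2) : ℕ := ∑ j, (x j).val

/-- Coordinatewise addition mod 2 on `{0,1}ⁿ`. -/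
def add2 {n : ℕ} (x y : Fin n → ZMod 2) : Fin n → ZMod 2 := fun j => x j + y j

/-- View a string in `{1,2,3}ⁿ` as a string in `{0,1,2,3}ⁿ`. -/
def lift3 {n : ℕ} (A : Fin n → Fin 3) : Fin n → Fin 4 := fun j => (A j).succ


lemma hval (z : ZMod 2) : (-1/2:ℝ) ^ z.val = if z = 1 then -1/2 else 1 := by
  fin_cases z <;> simp [ZMod.val] <;> intro h <;> [exact absurd h (by decide : (0 : Fin 2) ≠ 1); exact absurd rfl h]

lemma coord (b c : Fin 4) :
    (∑ a : Fin 3, (-1/2 : ℝ) ^ ((sstar a.succ b + sstar a.succ c).val)) =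
      if b = c then 3 else 0 := by
  simp only [Fin.sum_univ_three, hval]
  fin_cases b <;> fin_cases c <;>
    simp only [show ∀ x y : Fin 4, (sstar x y) = (bits x).1*(bits y).2+(bits x).2*(bits y).1
      from fun _ _ => rfl] <;>
    norm_num [bits] <;>
    simp (config := { decide := true }) <;> norm_num

/-- if `A` is uniform on `{1,2,3}ⁿ` and independently `C ~ p`,
then `H = (−1/2)^{|(A⋆B) +₂ (A⋆C)|}` is an unbiased estimator of `p(B)`:
`E[H] = p(B)`. -/
theorem unbiased_estimator {n : ℕ} (p : (Fin n → Fin 4) → ℝ)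
    (hp0 : ∀ C, 0 ≤ p C) (hp1 : ∑ C, p C = 1) (B : Fin n → Fin 4) :
    (∑ A : Fin n → Fin 3, ∑ C : Fin n → Fin 4,
        ((3 : ℝ) ^ n)⁻¹ * p C *
          (-1 / 2 : ℝ) ^ wt (add2 (starN (lift3 A) B) (starN (lift3 A) C))) =
      p B := by
  rw [Finset.sum_comm]
  have key : ∀ C : Fin n → Fin 4,
      (∑ A : Fin n → Fin 3,
        (-1/2 : ℝ) ^ wt (add2 (starN (lift3 A) B) (starN (lift3 A) C))) =
      if B = C then (3:ℝ)^n else 0 := by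
    intro C
    have h1 : ∀ A : Fin n → Fin 3,
        (-1/2 : ℝ) ^ wt (add2 (starN (lift3 A) B) (starN (lift3 A) C)) =
        ∏ j, (-1/2 : ℝ) ^ ((sstar (A j).succ (B j) + sstar (A j).succ (C j)).val) := by
      intro A
      rw [wt, ← Finset.prod_pow_eq_pow_sum]
      rfl
    simp_rw [h1]
    rw [← Fintype.piFinset_univ,
      ← Finset.prod_univ_sum (t := fun _ : Fin n => (Finset.univ : Finset (Fin 3)))
        (f := fun j a => (-1/2:ℝ) ^ ((sstar a.succ (B j) + sstar a.succ (C j)).val))]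
    simp_rw [coord]
    by_cases hBC : B = C
    · subst hBC; simp
    · obtain ⟨j, hj⟩ := Function.ne_iff.mp hBC
      rw [if_neg hBC]
      exact Finset.prod_eq_zero (Finset.mem_univ j) (by simp [hj])
  calc (∑ C, ∑ A : Fin n → Fin 3, ((3:ℝ)^n)⁻¹ * p C *
          (-1/2:ℝ) ^ wt (add2 (starN (lift3 A) B) (starN (lift3 A) C)))
      = ∑ C, ((3:ℝ)^n)⁻¹ * p C * (if B = C then (3:ℝ)^n else 0) := by
        refine Finset.sum_congr rfl fun C _ => ?_
        rw [← Finset.mul_sum, key C]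
    _ = p B := by
        rw [Finset.sum_eq_single B (fun C _ hC => by simp [Ne.symm hC]) (by simp)]
        simp
        field_simp
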